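/- If a linear map Φ : ℝ^{2n} → ℝ^{2n} preserves the linear symplectic width of every ellipsoid centered at the origin, then Φ preserves the entire symplectic spectrum of every ellipsoid centered at the origin. -/

import Mathlib

open Matrix

/-- The matrix of the standard complex structure `J₀` on `ℝ^{2n}`, coordinates indexed by
`Fin n × Fin 2`. -/
def stdJ (n : ℕ) : Matrix (Fin n × Fin 2) (Fin n × Fin 2) ℝ :=
  Matrix.of fun p q =>
    if p.1 = q.1 then
      (if p.2 = 0 ∧ q.2 = 1 then 1 else if p.2 = 1 ∧ q.2 = 0 then -1 else 0)
    else 0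

/-- A matrix is symplectic if `ΨᵀJ₀Ψ = J₀`. -/
def IsSymplecticMat (n : ℕ) (Ψ : Matrix (Fin n × Fin 2) (Fin n × Fin 2) ℝ) : Prop :=
  Ψᵀ * stdJ n * Ψ = stdJ n

/-- The closed Euclidean unit ball in `ℝ^{2n}`. -/
def unitBall (n : ℕ) : Set (Fin n × Fin 2 → ℝ) :=
  {v | ∑ i, v i ^ 2 ≤ 1}

/-- The standard open ellipsoid `E(r₁,…,r_n) = {z : Σ |z_j/r_j|² ≤ 1}` in
`ℝ^{2n} = ℂⁿ` (the `j`-th complex coordinate is `(z (j,0), z (j,1))`). -/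
def stdEllipsoid (n : ℕ) (r : Fin n → ℝ) : Set (Fin n × Fin 2 → ℝ) :=
  {z | ∑ j : Fin n, ((z (j, 0)) ^ 2 + (z (j, 1)) ^ 2) / (r j) ^ 2 ≤ 1}

/-- `r` is the symplectic spectrum of a subset `S ⊆ ℝ^{2n}`: `0 < r₁ ≤ … ≤ r_n` and
some symplectic matrix maps `S` onto the standard ellipsoid `E(r₁,…,r_n)`. -/
def IsSpectrum (n : ℕ) (S : Set (Fin n × Fin 2 → ℝ)) (r : Fin n → ℝ) : Prop :=
  Monotone r ∧ (∀ j, 0 < r j) ∧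
    ∃ Ψ : Matrix (Fin n × Fin 2) (Fin n × Fin 2) ℝ,
      IsSymplecticMat n Ψ ∧ (fun v => Ψ.mulVec v) '' S = stdEllipsoid n r

/-- `w` is the linear symplectic width of `S`: the least entry of a symplectic spectrum
of `S`. -/
def IsWidth (n : ℕ) (S : Set (Fin n × Fin 2 → ℝ)) (w : ℝ) : Prop :=
  ∃ r : Fin n → ℝ, IsSpectrum n S r ∧ IsLeast (Set.range r) w

/-!
Write `L = Φ⁻¹ J₀ Φ⁻ᵀ`. For symplectic `Ψ` the ellipsoid `Ψ⁻¹ B` has width `1`, so some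
symplectic `Ψ₁` carries `Φ Ψ⁻¹ B` onto `E(t)` with `t ≥ 1` and `min t = 1`. Since
`E(t) = diag(t) B`, this gives `Ψ Φ⁻¹ = N diag(t)⁻¹ Ψ₁` with `N B = B`, hence
`Ψ L Ψᵀ = N (⊕ⱼ t_j⁻² J₂) Nᵀ` is a contraction for every symplectic `Ψ`.
Entries of contractions lie in `[-1, 1]`. Rescaling a coordinate `p` by `μ` and its partner by
`μ⁻¹` is symplectic and multiplies by `μ` every entry `L p q` with `q` in another plane, so
these entries vanish; a symplectic transvection mixing two planes then forces the `2 × 2`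
blocks of `L` to coincide. So `L = c J₀` with `c² ≤ 1`, and `min t = 1` gives `c² ≥ 1`.
Thus `Φ` is symplectic or anti-symplectic, and composing with complex conjugation in the latter
case, a symplectic normal form of `E` yields one of `Φ E` with the same spectrum.
-/

namespace Matrix

variable {ι : Type*} [Fintype ι]

def IsContraction (M : Matrix ι ι ℝ) : Prop :=
  ∀ v : ι → ℝ, ∑ i, (M *ᵥ v) i ^ 2 ≤ ∑ i, v i ^ 2

namespace IsContraction

variable {M N : Matrix ι ι ℝ}

theorem mul (hM : IsContraction M) (hN : IsContraction N) : IsContraction (M * N) := fun v => by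
  rw [← mulVec_mulVec]
  exact (hM _).trans (hN v)

theorem transpose (hM : IsContraction M) : IsContraction Mᵀ := by
  intro v
  set w := Mᵀ *ᵥ v
  have hw : v ⬝ᵥ M *ᵥ w = ∑ i, w i ^ 2 := by
    rw [dotProduct_mulVec, ← mulVec_transpose]
    simp only [dotProduct, sq, w]
  have hcs : (v ⬝ᵥ M *ᵥ w) ^ 2 ≤ (∑ i, v i ^ 2) * ∑ i, w i ^ 2 :=
    (Finset.sum_mul_sq_le_sq_mul_sq _ _ _).trans
      (mul_le_mul_of_nonneg_left (hM w) (by positivity))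
  rw [hw] at hcs
  have hv : 0 ≤ ∑ i, v i ^ 2 := by positivity
  nlinarith

theorem sq_apply_le_one [DecidableEq ι] (hM : IsContraction M) (i j : ι) : M i j ^ 2 ≤ 1 :=
  calc M i j ^ 2 ≤ ∑ k, (M *ᵥ Pi.single j 1) k ^ 2 := by
        rw [mulVec_single_one]
        exact Finset.single_le_sum (f := fun k => M k j ^ 2) (fun k _ => sq_nonneg _)
          (Finset.mem_univ i)
    _ ≤ ∑ k, Pi.single j (1 : ℝ) k ^ 2 := hM _
    _ = 1 := by simp [Pi.single_apply]

end IsContraction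

end Matrix

theorem dotProduct_mulVec_self_eq_zero_of_transpose_eq_neg {ι : Type*} [Fintype ι]
    {M : Matrix ι ι ℝ} (hM : Mᵀ = -M) (x : ι → ℝ) : x ⬝ᵥ M *ᵥ x = 0 := by
  have h : x ⬝ᵥ M *ᵥ x = -(x ⬝ᵥ M *ᵥ x) := by
    conv_lhs => rw [dotProduct_mulVec, ← mulVec_transpose, hM, dotProduct_comm]
    simp [neg_mulVec]
  linarith

variable {n : ℕ}

theorem sum_sq_eq_sum_fst_sq_add_snd_sq (x : Fin n × Fin 2 → ℝ) :
    ∑ i, x i ^ 2 = ∑ j, (x (j, 0) ^ 2 + x (j, 1) ^ 2) := by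
  simp [Fintype.sum_prod_type, Fin.sum_univ_two]

def pairSkew (c : Fin n → ℝ) : Matrix (Fin n × Fin 2) (Fin n × Fin 2) ℝ :=
  Matrix.of fun p q =>
    if p.1 = q.1 then
      (if p.2 = 0 ∧ q.2 = 1 then c p.1 else if p.2 = 1 ∧ q.2 = 0 then -c p.1 else 0)
    else 0

theorem stdJ_eq_pairSkew : stdJ n = pairSkew fun _ => 1 := rfl

theorem pairSkew_const (x : ℝ) : pairSkew (fun _ => x) = x • stdJ n := by
  ext p q
  simp only [pairSkew, stdJ, Matrix.smul_apply, of_apply, smul_eq_mul]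
  split_ifs <;> ring

theorem pairSkew_mulVec_fst (c : Fin n → ℝ) (x : Fin n × Fin 2 → ℝ) (j : Fin n) :
    (pairSkew c *ᵥ x) (j, 0) = c j * x (j, 1) := by
  simp [pairSkew, mulVec, dotProduct, Fintype.sum_prod_type]

theorem pairSkew_mulVec_snd (c : Fin n → ℝ) (x : Fin n × Fin 2 → ℝ) (j : Fin n) :
    (pairSkew c *ᵥ x) (j, 1) = -(c j * x (j, 0)) := by
  simp [pairSkew, mulVec, dotProduct, Fintype.sum_prod_type]

theorem isContraction_pairSkew {c : Fin n → ℝ} (hc : ∀ j, c j ^ 2 ≤ 1) :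
    IsContraction (pairSkew c) := by
  intro x
  simp only [sum_sq_eq_sum_fst_sq_add_snd_sq x, sum_sq_eq_sum_fst_sq_add_snd_sq (pairSkew c *ᵥ x),
    pairSkew_mulVec_fst, pairSkew_mulVec_snd]
  refine Finset.sum_le_sum fun j _ => ?_
  rw [neg_sq, mul_pow, mul_pow]
  nlinarith [mul_le_mul_of_nonneg_right (hc j) (sq_nonneg (x (j, 0))),
    mul_le_mul_of_nonneg_right (hc j) (sq_nonneg (x (j, 1)))]

theorem diagonal_mul_pairSkew_mul_diagonal (d : Fin n × Fin 2 → ℝ) (c : Fin n → ℝ) :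
    diagonal d * pairSkew c * diagonal d = pairSkew fun j => d (j, 0) * c j * d (j, 1) := by
  ext ⟨j, a⟩ ⟨k, b⟩
  rw [mul_diagonal, diagonal_mul]
  by_cases h : j = k
  · subst h
    fin_cases a <;> fin_cases b <;> simp [pairSkew]; ring
  · simp [pairSkew, h]

theorem eq_pairSkew_of_transpose_eq_neg {M : Matrix (Fin n × Fin 2) (Fin n × Fin 2) ℝ}
    (hskew : Mᵀ = -M) (hoff : ∀ p q : Fin n × Fin 2, p.1 ≠ q.1 → M p q = 0) :
    M = pairSkew fun j => M (j, 0) (j, 1) := by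
  have hM (p q : Fin n × Fin 2) : M q p = -M p q := by simpa using congrFun₂ hskew p q
  ext ⟨j, a⟩ ⟨k, b⟩
  by_cases h : j = k
  · subst h
    fin_cases a <;> fin_cases b <;> simp [pairSkew] <;>
      linarith [hM (j, 0) (j, 0), hM (j, 1) (j, 1), hM (j, 0) (j, 1)]
  · simp [pairSkew, h, hoff (j, a) (k, b) h]

theorem stdJ_transpose : (stdJ n)ᵀ = -stdJ n := by
  ext ⟨j, a⟩ ⟨k, b⟩
  by_cases h : j = k
  · subst h
    fin_cases a <;> fin_cases b <;> simp [stdJ]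
  · simp [stdJ, h, Ne.symm h]

theorem stdJ_mul_stdJ : stdJ n * stdJ n = -1 := by
  ext ⟨j, a⟩ ⟨k, b⟩
  by_cases h : j = k
  · subst h
    fin_cases a <;> fin_cases b <;> simp [stdJ, mul_apply, Fintype.sum_prod_type, one_apply]
  · simp [stdJ, mul_apply, Fintype.sum_prod_type, one_apply, h]

section Symplectic

variable {Ψ Ψ' : Matrix (Fin n × Fin 2) (Fin n × Fin 2) ℝ}

theorem IsSymplecticMat.mul (hΨ : IsSymplecticMat n Ψ) (hΨ' : IsSymplecticMat n Ψ') :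
    IsSymplecticMat n (Ψ * Ψ') := by
  rw [IsSymplecticMat, transpose_mul,
    show Ψ'ᵀ * Ψᵀ * stdJ n * (Ψ * Ψ') = Ψ'ᵀ * (Ψᵀ * stdJ n * Ψ) * Ψ' by noncomm_ring, hΨ, hΨ']

theorem IsSymplecticMat.neg_stdJ_mul_transpose_mul_stdJ_mul_self (hΨ : IsSymplecticMat n Ψ) :
    -stdJ n * Ψᵀ * stdJ n * Ψ = 1 := by
  rw [Matrix.mul_assoc, Matrix.mul_assoc, ← Matrix.mul_assoc Ψᵀ, hΨ, neg_mul, stdJ_mul_stdJ,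
    neg_neg]

theorem IsSymplecticMat.isUnit_det (hΨ : IsSymplecticMat n Ψ) : IsUnit Ψ.det :=
  isUnit_det_of_left_inverse hΨ.neg_stdJ_mul_transpose_mul_stdJ_mul_self

theorem IsSymplecticMat.mul_stdJ_mul_transpose (hΨ : IsSymplecticMat n Ψ) :
    Ψ * stdJ n * Ψᵀ = stdJ n := by
  have h := mul_eq_one_comm.mp hΨ.neg_stdJ_mul_transpose_mul_stdJ_mul_self
  calc Ψ * stdJ n * Ψᵀ = Ψ * (-stdJ n * Ψᵀ * stdJ n) * stdJ n := by
        simp only [neg_mul, mul_neg, Matrix.mul_assoc, stdJ_mul_stdJ, Matrix.mul_one, neg_neg]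
    _ = stdJ n := by rw [h, Matrix.one_mul]

theorem isSymplecticMat_iff_mul_stdJ_mul_transpose :
    IsSymplecticMat n Ψ ↔ Ψ * stdJ n * Ψᵀ = stdJ n := by
  refine ⟨IsSymplecticMat.mul_stdJ_mul_transpose, fun h => ?_⟩
  have hΨt : IsSymplecticMat n Ψᵀ := by rwa [IsSymplecticMat, transpose_transpose]
  have h' := hΨt.mul_stdJ_mul_transpose
  rwa [transpose_transpose] at h'

theorem isSymplecticMat_diagonal {d : Fin n × Fin 2 → ℝ} (hd : ∀ j, d (j, 0) * d (j, 1) = 1) :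
    IsSymplecticMat n (diagonal d) := by
  rw [IsSymplecticMat, diagonal_transpose, stdJ_eq_pairSkew, diagonal_mul_pairSkew_mul_diagonal]
  simp only [mul_one, hd]

noncomputable def pairScaling (p : Fin n × Fin 2) (μ : ℝ) :
    Matrix (Fin n × Fin 2) (Fin n × Fin 2) ℝ :=
  diagonal fun x => if x = p then μ else if x.1 = p.1 then μ⁻¹ else 1

theorem isSymplecticMat_pairScaling (p : Fin n × Fin 2) {μ : ℝ} (hμ : μ ≠ 0) :
    IsSymplecticMat n (pairScaling p μ) := by
  refine isSymplecticMat_diagonal fun j => ?_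
  obtain ⟨i, a⟩ := p
  by_cases h : j = i
  · subst h
    fin_cases a <;> simp [hμ]
  · simp [h]

theorem isSymplecticMat_one_add_vecMulVec (a : Fin n × Fin 2 → ℝ) :
    IsSymplecticMat n (1 + vecMulVec a (stdJ n *ᵥ a)) := by
  set b := stdJ n *ᵥ a
  have hJa : stdJ n * vecMulVec a b = vecMulVec b b := mul_vecMulVec _ _ _
  have haJ : vecMulVec b a * stdJ n = -vecMulVec b b := by
    rw [vecMulVec_mul, ← mulVec_transpose, stdJ_transpose, neg_mulVec, vecMulVec_neg]
  have hbab : vecMulVec b a * vecMulVec b b = 0 := by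
    rw [vecMulVec_mul_vecMulVec,
      dotProduct_mulVec_self_eq_zero_of_transpose_eq_neg stdJ_transpose, zero_smul,
      vecMulVec_zero]
  rw [IsSymplecticMat, transpose_add, transpose_one, transpose_vecMulVec]
  calc (1 + vecMulVec b a) * stdJ n * (1 + vecMulVec a b)
      = stdJ n + stdJ n * vecMulVec a b + vecMulVec b a * stdJ n
        + vecMulVec b a * (stdJ n * vecMulVec a b) := by noncomm_ring
    _ = stdJ n := by rw [hJa, haJ, hbab]; abel

end Symplectic

noncomputable def complexConjMat (n : ℕ) : Matrix (Fin n × Fin 2) (Fin n × Fin 2) ℝ :=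
  diagonal fun p => if p.2 = 0 then 1 else -1

theorem complexConjMat_mul_self : complexConjMat n * complexConjMat n = 1 := by
  rw [complexConjMat, diagonal_mul_diagonal, ← diagonal_one]
  congr 1
  ext p
  split_ifs <;> norm_num

theorem complexConjMat_transpose : (complexConjMat n)ᵀ = complexConjMat n :=
  diagonal_transpose _

theorem complexConjMat_mul_stdJ_mul_complexConjMat :
    complexConjMat n * stdJ n * complexConjMat n = -stdJ n := by
  rw [complexConjMat, stdJ_eq_pairSkew, diagonal_mul_pairSkew_mul_diagonal]
  simp [pairSkew_const]

theorem IsSymplecticMat.complexConjMat_mul_mul_complexConjMat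
    {Ψ : Matrix (Fin n × Fin 2) (Fin n × Fin 2) ℝ} (hΨ : IsSymplecticMat n Ψ) :
    IsSymplecticMat n (complexConjMat n * Ψ * complexConjMat n) := by
  set C := complexConjMat n
  have h : Ψᵀ * stdJ n * Ψ = stdJ n := hΨ
  calc (C * Ψ * C)ᵀ * stdJ n * (C * Ψ * C) = C * (Ψᵀ * (C * stdJ n * C) * Ψ) * C := by
        rw [transpose_mul, transpose_mul, complexConjMat_transpose]; noncomm_ring
    _ = stdJ n := by
        simp only [C, complexConjMat_mul_stdJ_mul_complexConjMat, mul_neg, neg_mul, h, neg_neg]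

theorem image_mulVec_image (A B : Matrix (Fin n × Fin 2) (Fin n × Fin 2) ℝ)
    (S : Set (Fin n × Fin 2 → ℝ)) :
    (A *ᵥ ·) '' ((B *ᵥ ·) '' S) = ((A * B) *ᵥ ·) '' S := by
  simp [Set.image_image, mulVec_mulVec]

theorem stdEllipsoid_eq_image_unitBall {t : Fin n → ℝ} (ht : ∀ j, t j ≠ 0) :
    stdEllipsoid n t = (diagonal (fun p => t p.1) *ᵥ ·) '' unitBall n := by
  rw [Set.image_eq_preimage_of_inverse (g := (diagonal (fun p => (t p.1)⁻¹) *ᵥ ·))]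
  · ext z
    simp [stdEllipsoid, unitBall, mulVec_diagonal, sum_sq_eq_sum_fst_sq_add_snd_sq, mul_pow,
      inv_pow, div_eq_inv_mul, mul_add]
  all_goals intro v; simp [mulVec_mulVec, diagonal_mul_diagonal, ht]

theorem image_complexConjMat_stdEllipsoid (r : Fin n → ℝ) :
    (complexConjMat n *ᵥ ·) '' stdEllipsoid n r = stdEllipsoid n r := by
  rw [Set.image_eq_preimage_of_inverse (g := (complexConjMat n *ᵥ ·))]
  · ext z
    simp [stdEllipsoid, complexConjMat, mulVec_diagonal]
  all_goals intro v; simp [mulVec_mulVec, complexConjMat_mul_self]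

theorem Matrix.IsContraction.of_image_unitBall_subset
    {N : Matrix (Fin n × Fin 2) (Fin n × Fin 2) ℝ} (h : (N *ᵥ ·) '' unitBall n ⊆ unitBall n) :
    N.IsContraction := by
  intro v
  by_contra! hlt
  set a := ∑ i, v i ^ 2
  set b := ∑ i, (N *ᵥ v) i ^ 2
  have ha : 0 ≤ a := by positivity
  set c := √(2 / (a + b))
  have hc : c ^ 2 = 2 / (a + b) := Real.sq_sqrt (by positivity)
  have hscale (w : Fin n × Fin 2 → ℝ) : ∑ i, (c • w) i ^ 2 = c ^ 2 * ∑ i, w i ^ 2 := by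
    simp [mul_pow, Finset.mul_sum]
  have hv : c • v ∈ unitBall n := show ∑ i, (c • v) i ^ 2 ≤ 1 by
    rw [hscale, hc, div_mul_eq_mul_div, div_le_one (by linarith)]
    linarith
  have hNv : ∑ i, (N *ᵥ (c • v)) i ^ 2 ≤ 1 := h ⟨c • v, hv, rfl⟩
  rw [mulVec_smul, hscale, hc, div_mul_eq_mul_div, div_le_one (by linarith)] at hNv
  linarith

section Spectrum

variable {S : Set (Fin n × Fin 2 → ℝ)} {r : Fin n → ℝ}

theorem IsSpectrum.image_mulVec {Φ Φ' : Matrix (Fin n × Fin 2) (Fin n × Fin 2) ℝ}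
    (h : IsSpectrum n S r) (hΦ' : IsSymplecticMat n Φ') (hinv : Φ' * Φ = 1) :
    IsSpectrum n ((Φ *ᵥ ·) '' S) r := by
  obtain ⟨hmono, hpos, Ψ, hΨ, hS⟩ := h
  refine ⟨hmono, hpos, Ψ * Φ', hΨ.mul hΦ', ?_⟩
  rw [image_mulVec_image, Matrix.mul_assoc, hinv, Matrix.mul_one, hS]

theorem IsSpectrum.image_complexConjMat (h : IsSpectrum n S r) :
    IsSpectrum n ((complexConjMat n *ᵥ ·) '' S) r := by
  obtain ⟨hmono, hpos, Ψ, hΨ, hS⟩ := h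
  refine ⟨hmono, hpos, complexConjMat n * Ψ * complexConjMat n,
    hΨ.complexConjMat_mul_mul_complexConjMat, ?_⟩
  rw [image_mulVec_image, Matrix.mul_assoc, complexConjMat_mul_self, Matrix.mul_one,
    ← image_mulVec_image, hS, image_complexConjMat_stdEllipsoid]

end Spectrum

theorem isWidth_image_inv_unitBall [Nonempty (Fin n)]
    {Ψ : Matrix (Fin n × Fin 2) (Fin n × Fin 2) ℝ} (hΨ : IsSymplecticMat n Ψ) :
    IsWidth n ((Ψ⁻¹ *ᵥ ·) '' unitBall n) 1 := by
  refine ⟨fun _ => 1, ⟨monotone_const, fun _ => one_pos, Ψ, hΨ, ?_⟩,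
    ⟨⟨Classical.arbitrary _, rfl⟩, by rintro _ ⟨_, rfl⟩; rfl⟩⟩
  rw [image_mulVec_image, mul_nonsing_inv _ hΨ.isUnit_det,
    stdEllipsoid_eq_image_unitBall fun _ => one_ne_zero]
  simp

def IsSymplecticallyContractive (M : Matrix (Fin n × Fin 2) (Fin n × Fin 2) ℝ) : Prop :=
  ∀ Ψ, IsSymplecticMat n Ψ → (Ψ * M * Ψᵀ).IsContraction

namespace IsSymplecticallyContractive

variable {M : Matrix (Fin n × Fin 2) (Fin n × Fin 2) ℝ}

theorem mul_mul_transpose (hM : IsSymplecticallyContractive M)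
    {Ψ : Matrix (Fin n × Fin 2) (Fin n × Fin 2) ℝ} (hΨ : IsSymplecticMat n Ψ) :
    IsSymplecticallyContractive (Ψ * M * Ψᵀ) := fun Ψ' hΨ' => by
  simpa [transpose_mul, Matrix.mul_assoc] using hM (Ψ' * Ψ) (hΨ'.mul hΨ)

theorem apply_eq_zero (hM : IsSymplecticallyContractive M) {p q : Fin n × Fin 2}
    (hpq : p.1 ≠ q.1) : M p q = 0 := by
  by_contra hMpq
  have hqp : q ≠ p := fun h => hpq (h ▸ rfl)
  have hμ : 2 / M p q ≠ 0 := by simpa using hMpq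
  have hentry :
      (pairScaling p (2 / M p q) * M * (pairScaling p (2 / M p q))ᵀ) p q = 2 := by
    rw [pairScaling, diagonal_transpose, mul_diagonal, diagonal_mul]
    simp [hqp, Ne.symm hpq, hMpq]
  have h := (hM _ (isSymplecticMat_pairScaling p hμ)).sq_apply_le_one p q
  rw [hentry] at h
  norm_num at h

theorem pairSkew_eq {c : Fin n → ℝ} (hc : IsSymplecticallyContractive (pairSkew c))
    (j k : Fin n) : c j = c k := by
  rcases eq_or_ne j k with rfl | hjk
  · rfl
  set a : Fin n × Fin 2 → ℝ := Pi.single (j, 0) 1 + Pi.single (k, 0) 1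
  set τ := 1 + vecMulVec a (stdJ n *ᵥ a)
  have hentry : (τ * pairSkew c * τᵀ) (j, 0) (k, 0) = c k - c j := by
    rw [mul_mul_apply, transpose_transpose]
    simp [τ, a, pairSkew, stdJ, mulVec, dotProduct, Fintype.sum_prod_type, Fin.sum_univ_two,
      Pi.single_apply, vecMulVec_apply, one_apply, hjk, Ne.symm hjk, Finset.sum_add_distrib,
      Finset.sum_neg_distrib, Finset.sum_ite_eq]
    ring
  have h := (hc.mul_mul_transpose (isSymplecticMat_one_add_vecMulVec a)).apply_eq_zero
    (p := (j, 0)) (q := (k, 0)) hjk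
  linarith

theorem exists_eq_smul_stdJ [Nonempty (Fin n)] (hM : IsSymplecticallyContractive M)
    (hskew : Mᵀ = -M) : ∃ c : ℝ, c ^ 2 ≤ 1 ∧ M = c • stdJ n := by
  set j₀ := Classical.arbitrary (Fin n)
  have hpair := eq_pairSkew_of_transpose_eq_neg hskew fun _ _ => hM.apply_eq_zero
  have hc : IsSymplecticallyContractive (pairSkew fun j => M (j, 0) (j, 1)) := by
    rwa [← hpair]
  refine ⟨M (j₀, 0) (j₀, 1), ?_, ?_⟩
  · simpa using (hM 1 (by simp [IsSymplecticMat])).sq_apply_le_one (j₀, 0) (j₀, 1)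
  · calc M = pairSkew fun j => M (j, 0) (j, 1) := hpair
      _ = pairSkew fun _ => M (j₀, 0) (j₀, 1) :=
        congrArg pairSkew (funext fun j => hc.pairSkew_eq j j₀)
      _ = _ := pairSkew_const _

end IsSymplecticallyContractive

def PreservesWidth (n : ℕ) (Φ : Matrix (Fin n × Fin 2) (Fin n × Fin 2) ℝ) : Prop :=
  ∀ A : Matrix (Fin n × Fin 2) (Fin n × Fin 2) ℝ, A.det ≠ 0 →
    ∀ w : ℝ, IsWidth n ((fun v => A.mulVec v) '' unitBall n) w →
      IsWidth n ((fun v => Φ.mulVec v) '' ((fun v => A.mulVec v) '' unitBall n)) w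

namespace PreservesWidth

variable {Φ : Matrix (Fin n × Fin 2) (Fin n × Fin 2) ℝ}

theorem exists_image_eq_stdEllipsoid [Nonempty (Fin n)] (hpres : PreservesWidth n Φ)
    {Ψ : Matrix (Fin n × Fin 2) (Fin n × Fin 2) ℝ} (hΨ : IsSymplecticMat n Ψ) :
    ∃ (Ψ₁ : Matrix (Fin n × Fin 2) (Fin n × Fin 2) ℝ) (t : Fin n → ℝ), IsSymplecticMat n Ψ₁ ∧
      (∀ j, 1 ≤ t j) ∧ (∃ j, t j = 1) ∧
      ((Ψ₁ * Φ * Ψ⁻¹) *ᵥ ·) '' unitBall n = stdEllipsoid n t := by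
  obtain ⟨t, ⟨-, -, Ψ₁, hΨ₁, hE⟩, ht1, ht⟩ :=
    hpres Ψ⁻¹ (isUnit_nonsing_inv_det _ hΨ.isUnit_det).ne_zero 1 (isWidth_image_inv_unitBall hΨ)
  refine ⟨Ψ₁, t, hΨ₁, fun j => ht ⟨j, rfl⟩, ht1, ?_⟩
  rwa [image_mulVec_image, image_mulVec_image] at hE

theorem exists_eq_mul_pairSkew_mul_transpose [Nonempty (Fin n)] (hpres : PreservesWidth n Φ)
    (hΦ : IsUnit Φ.det) {Ψ : Matrix (Fin n × Fin 2) (Fin n × Fin 2) ℝ}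
    (hΨ : IsSymplecticMat n Ψ) :
    ∃ (N : Matrix (Fin n × Fin 2) (Fin n × Fin 2) ℝ) (s : Fin n → ℝ),
      IsUnit N.det ∧ (N *ᵥ ·) '' unitBall n = unitBall n ∧ (∀ j, s j ^ 2 ≤ 1) ∧
      (∃ j, s j = 1) ∧ Ψ * Φ⁻¹ * stdJ n * (Ψ * Φ⁻¹)ᵀ = N * pairSkew s * Nᵀ := by
  obtain ⟨Ψ₁, t, hΨ₁, ht1, ⟨j₀, hj₀⟩, hE⟩ := hpres.exists_image_eq_stdEllipsoid hΨ
  have ht0 (j : Fin n) : t j ≠ 0 := by linarith [ht1 j]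
  have hΨu := hΨ.isUnit_det
  have hΨ₁u := hΨ₁.isUnit_det
  set D := diagonal fun p : Fin n × Fin 2 => t p.1
  set D' := diagonal fun p : Fin n × Fin 2 => (t p.1)⁻¹
  have hDD' : D * D' = 1 := by simp [D, D', diagonal_mul_diagonal, ht0]
  set N := Ψ * Φ⁻¹ * Ψ₁⁻¹ * D
  have hN : (N *ᵥ ·) '' unitBall n = unitBall n := by
    rw [← image_mulVec_image, ← stdEllipsoid_eq_image_unitBall ht0, ← hE, image_mulVec_image]
    simp [Matrix.mul_assoc, nonsing_inv_mul_cancel_left _ _ hΨ₁u,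
      nonsing_inv_mul_cancel_left _ _ hΦ, mul_nonsing_inv _ hΨu]
  have hfac : Ψ * Φ⁻¹ = N * D' * Ψ₁ := by
    simp [N, Matrix.mul_assoc, hDD', nonsing_inv_mul _ hΨ₁u]
  refine ⟨N, fun j => (t j)⁻¹ * 1 * (t j)⁻¹, ?_, hN, fun j => ?_, ⟨j₀, by simp [hj₀]⟩, ?_⟩
  · simp only [N, D, det_mul, det_diagonal, IsUnit.mul_iff]
    exact ⟨⟨⟨hΨu, isUnit_nonsing_inv_det _ hΦ⟩, isUnit_nonsing_inv_det _ hΨ₁u⟩,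
      (Finset.prod_ne_zero_iff.2 fun p _ => ht0 p.1).isUnit⟩
  · show ((t j)⁻¹ * 1 * (t j)⁻¹) ^ 2 ≤ 1
    rw [mul_one, ← sq, ← pow_mul]
    exact pow_le_one₀ (inv_nonneg.2 (by linarith [ht1 j])) (inv_le_one_of_one_le₀ (ht1 j))
  · rw [hfac, show N * D' * Ψ₁ * stdJ n * (N * D' * Ψ₁)ᵀ
        = N * (D' * (Ψ₁ * stdJ n * Ψ₁ᵀ) * D') * Nᵀ by
      simp only [transpose_mul, D', diagonal_transpose]; noncomm_ring,
      hΨ₁.mul_stdJ_mul_transpose, stdJ_eq_pairSkew, diagonal_mul_pairSkew_mul_diagonal]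

theorem isSymplecticallyContractive [Nonempty (Fin n)] (hpres : PreservesWidth n Φ)
    (hΦ : IsUnit Φ.det) : IsSymplecticallyContractive (Φ⁻¹ * stdJ n * Φ⁻¹ᵀ) := by
  intro Ψ hΨ
  obtain ⟨N, s, -, hN, hs, -, heq⟩ := hpres.exists_eq_mul_pairSkew_mul_transpose hΦ hΨ
  have hNc := IsContraction.of_image_unitBall_subset hN.subset
  rw [show Ψ * (Φ⁻¹ * stdJ n * Φ⁻¹ᵀ) * Ψᵀ = Ψ * Φ⁻¹ * stdJ n * (Ψ * Φ⁻¹)ᵀ by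
    rw [transpose_mul]; noncomm_ring, heq]
  exact (hNc.mul (isContraction_pairSkew hs)).mul hNc.transpose

theorem one_le_sq [Nonempty (Fin n)] (hpres : PreservesWidth n Φ) (hΦ : IsUnit Φ.det) {c : ℝ}
    (hc : Φ⁻¹ * stdJ n * Φ⁻¹ᵀ = c • stdJ n) : 1 ≤ c ^ 2 := by
  obtain ⟨N, s, hNu, hN, -, ⟨j, hj⟩, heq⟩ :=
    hpres.exists_eq_mul_pairSkew_mul_transpose hΦ (Ψ := 1) (by simp [IsSymplecticMat])
  have hN' : (N⁻¹ *ᵥ ·) '' unitBall n = unitBall n := by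
    conv_lhs => rw [← hN]
    simp [image_mulVec_image, nonsing_inv_mul _ hNu]
  have hNc := IsContraction.of_image_unitBall_subset hN'.subset
  have hJ : (N⁻¹ * stdJ n * N⁻¹ᵀ).IsContraction :=
    (hNc.mul (isContraction_pairSkew (c := fun _ => 1) (by simp))).mul hNc.transpose
  have hs : pairSkew s = c • (N⁻¹ * stdJ n * N⁻¹ᵀ) :=
    calc pairSkew s = N⁻¹ * (N * pairSkew s * Nᵀ) * N⁻¹ᵀ := by
          rw [transpose_nonsing_inv]
          simp [Matrix.mul_assoc, nonsing_inv_mul_cancel_left _ _ hNu,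
            mul_nonsing_inv _ (isUnit_det_transpose N hNu)]
      _ = c • (N⁻¹ * stdJ n * N⁻¹ᵀ) := by
          rw [← heq, Matrix.one_mul, hc, Matrix.mul_smul, Matrix.smul_mul]
  have h1 : c * (N⁻¹ * stdJ n * N⁻¹ᵀ) (j, 0) (j, 1) = 1 := by
    simpa [pairSkew, hj] using (congrFun₂ hs (j, 0) (j, 1)).symm
  nlinarith [hJ.sq_apply_le_one (j, 0) (j, 1)]

theorem inv_mul_stdJ_mul_inv_transpose_eq (hpres : PreservesWidth n Φ) (hΦ : IsUnit Φ.det) :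
    Φ⁻¹ * stdJ n * Φ⁻¹ᵀ = stdJ n ∨ Φ⁻¹ * stdJ n * Φ⁻¹ᵀ = -stdJ n := by
  rcases isEmpty_or_nonempty (Fin n) with hn | hn
  · exact Or.inl (ext fun ⟨j, _⟩ => isEmptyElim j)
  have hskew : (Φ⁻¹ * stdJ n * Φ⁻¹ᵀ)ᵀ = -(Φ⁻¹ * stdJ n * Φ⁻¹ᵀ) := by
    rw [transpose_mul, transpose_mul, transpose_transpose, stdJ_transpose]
    noncomm_ring
  obtain ⟨c, hc1, hc⟩ := (hpres.isSymplecticallyContractive hΦ).exists_eq_smul_stdJ hskew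
  rcases sq_eq_one_iff.1 (le_antisymm hc1 (hpres.one_le_sq hΦ hc)) with rfl | rfl
  · exact Or.inl (by simpa using hc)
  · exact Or.inr (by simpa using hc)

end PreservesWidth

/-- If a nonsingular linear map `Φ` preserves the linear symplectic width of every
ellipsoid centered at the origin, then it preserves the entire symplectic spectrum of
every ellipsoid centered at the origin. -/
theorem width_preserving_preserves_spectrum (n : ℕ)
    (Φ : Matrix (Fin n × Fin 2) (Fin n × Fin 2) ℝ) (hΦ : Φ.det ≠ 0)
    (hpres : ∀ A : Matrix (Fin n × Fin 2) (Fin n × Fin 2) ℝ, A.det ≠ 0 →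
      ∀ w : ℝ, IsWidth n ((fun v => A.mulVec v) '' unitBall n) w →
        IsWidth n ((fun v => Φ.mulVec v) '' ((fun v => A.mulVec v) '' unitBall n)) w) :
    ∀ A : Matrix (Fin n × Fin 2) (Fin n × Fin 2) ℝ, A.det ≠ 0 →
      ∀ r : Fin n → ℝ, IsSpectrum n ((fun v => A.mulVec v) '' unitBall n) r →
        IsSpectrum n ((fun v => Φ.mulVec v) '' ((fun v => A.mulVec v) '' unitBall n)) r := by
  intro A _ r hr
  have hΦu : IsUnit Φ.det := hΦ.isUnit
  rcases PreservesWidth.inv_mul_stdJ_mul_inv_transpose_eq hpres hΦu with hL | hL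
  · exact hr.image_mulVec (isSymplecticMat_iff_mul_stdJ_mul_transpose.2 hL)
      (nonsing_inv_mul Φ hΦu)
  · have hsymp : IsSymplecticMat n (Φ⁻¹ * complexConjMat n) := by
      rw [isSymplecticMat_iff_mul_stdJ_mul_transpose, transpose_mul, complexConjMat_transpose,
        show Φ⁻¹ * complexConjMat n * stdJ n * (complexConjMat n * Φ⁻¹ᵀ)
          = Φ⁻¹ * (complexConjMat n * stdJ n * complexConjMat n) * Φ⁻¹ᵀ by noncomm_ring,
        complexConjMat_mul_stdJ_mul_complexConjMat, mul_neg, neg_mul, hL, neg_neg]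
    have hinv : Φ⁻¹ * complexConjMat n * (complexConjMat n * Φ) = 1 := by
      rw [Matrix.mul_assoc, ← Matrix.mul_assoc (complexConjMat n), complexConjMat_mul_self,
        Matrix.one_mul, nonsing_inv_mul _ hΦu]
    rw [show Φ = complexConjMat n * (complexConjMat n * Φ) by
      rw [← Matrix.mul_assoc, complexConjMat_mul_self, Matrix.one_mul], ← image_mulVec_image]
    exact (hr.image_mulVec hsymp hinv).image_complexConjMat
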